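/- arXiv:2603.24859 — 5 statements merged into one kernel-verified Lean document; each statement's English description precedes it below -/
import Mathlib

section
/- Let G be a chain-connected anterial graph over a finite node set V and let C ⊆ V. Then the intervened graph do_C(G) is a chain-connected anterial graph. -/
open MeasureTheory

universe u v w

/-! ## Mixed graphs -/

/-- A mixed graph over a node set `V`: directed, undirected and bidirected edges.
The undirected and bidirected edge relations are read symmetrically. -/
structure MixedGraph (V : Type u) where
  dir : V → V → Prop
  undir : V → V → Prop
  bidir : V → V → Prop

namespace MixedGraph

variable {V : Type u} (G : MixedGraph V)

/-- The (symmetrised) undirected-edge relation: there is an undirected edge between `a` and `b`. -/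
def Undir (a b : V) : Prop := G.undir a b ∨ G.undir b a

/-- The (symmetrised) bidirected-edge relation. -/
def Bidir (a b : V) : Prop := G.bidir a b ∨ G.bidir b a

/-- Two nodes are adjacent if they are joined by an edge of any type. -/
def Adj (a b : V) : Prop := G.dir a b ∨ G.dir b a ∨ G.Undir a b ∨ G.Bidir a b

/-- One step of a semi-directed path: a directed edge `a → b` or an undirected edge. -/
def sdStep (a b : V) : Prop := G.dir a b ∨ G.Undir a b

/-- There is a semi-directed path (possibly trivial) from `a` to `b`. -/
def SemiDirReach (a b : V) : Prop := Relation.ReflTransGen G.sdStep a b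

/-- The anterior of a node set `S`. -/
def ant (S : Set V) : Set V := {x | x ∉ S ∧ ∃ i ∈ S, G.SemiDirReach x i}

/-- There is a semi-directed cycle in `G`. -/
def HasSemiDirCycle : Prop := ∃ a b, G.dir a b ∧ G.SemiDirReach b a

/-- A chain mixed graph: no semi-directed cycles. -/
def IsCMG : Prop := ¬ G.HasSemiDirCycle

/-- An anterial graph: a chain mixed graph in which no two nodes joined by a bidirected
edge are connected by a semi-directed path. -/
def IsAnterial : Prop := G.IsCMG ∧ ∀ a b, G.Bidir a b → ¬ G.SemiDirReach a b

/-- The chain component of a node `i`: all nodes connected to `i` by a sequence of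
undirected edges (including `i` itself). -/
def ChainComp (i : V) : Set V := {j | Relation.ReflTransGen G.Undir i j}

/-- Chain-connected: `i ↔ j` implies `i ↔ k` for every `k` in the chain component of `j`. -/
def ChainConnected : Prop := ∀ i j k : V, G.Bidir i j → k ∈ G.ChainComp j → G.Bidir i k

/-- The neighbours of a node. -/
def neSet (i : V) : Set V := {x | G.Undir x i}

/-- The parents of a node. -/
def paSet (i : V) : Set V := {x | G.dir x i}

lemma undir_symmetric : Symmetric G.Undir := fun _ _ h => h.elim Or.inr Or.inl

end MixedGraph

/-- The kind of an edge traversed on a walk, relative to the direction of travel. -/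
inductive EdgeKind : Type
  | dirR   -- directed edge pointing forwards
  | dirL   -- directed edge pointing backwards
  | undirE -- undirected edge
  | bidirE -- bidirected edge

/-- Whether an edge of the given kind joins `a` to `b` (in the direction of travel). -/
def MixedGraph.edgeHolds {V : Type u} (G : MixedGraph V) : EdgeKind → V → V → Prop
  | .dirR, a, b => G.dir a b
  | .dirL, a, b => G.dir b a
  | .undirE, a, b => G.Undir a b
  | .bidirE, a, b => G.Bidir a b

/-- A walk in a mixed graph: a sequence of nodes in which every pair of consecutive nodes
is joined by an edge (nodes and edges may repeat). -/
structure GWalk {V : Type u} (G : MixedGraph V) where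
  len : ℕ
  node : ℕ → V
  kind : ℕ → EdgeKind
  valid : ∀ k, k < len → G.edgeHolds (kind k) (node k) (node (k + 1))

namespace GWalk

variable {V : Type u} {G : MixedGraph V} (w : GWalk G)

/-- The nodes with indices in `[a, b]` form a section of the walk: a maximal subwalk
all of whose edges are undirected. -/
def IsSection (a b : ℕ) : Prop :=
  a ≤ b ∧ b ≤ w.len ∧ (∀ k, a ≤ k → k < b → w.kind k = EdgeKind.undirE) ∧
    (a = 0 ∨ w.kind (a - 1) ≠ EdgeKind.undirE) ∧ (b = w.len ∨ w.kind b ≠ EdgeKind.undirE)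

/-- A collider section: the two edges of the walk immediately adjacent to the section
both have an arrowhead at the section. -/
def IsColliderSection (a b : ℕ) : Prop :=
  w.IsSection a b ∧ 0 < a ∧ b < w.len ∧
    (w.kind (a - 1) = EdgeKind.dirR ∨ w.kind (a - 1) = EdgeKind.bidirE) ∧
    (w.kind b = EdgeKind.dirL ∨ w.kind b = EdgeKind.bidirE)

/-- The walk is connecting given `C`: every collider section contains a node of `C` and
every non-collider section contains no node of `C`. -/
def ConnectingGiven (C : Set V) : Prop :=
  ∀ a b : ℕ, w.IsSection a b →
    (w.IsColliderSection a b → ∃ m, a ≤ m ∧ m ≤ b ∧ w.node m ∈ C) ∧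
    (¬ w.IsColliderSection a b → ∀ m, a ≤ m → m ≤ b → w.node m ∉ C)

/-- A semi-directed walk: every edge is undirected or directed forwards. -/
def IsSemiDirected : Prop :=
  ∀ k, k < w.len → (w.kind k = EdgeKind.dirR ∨ w.kind k = EdgeKind.undirE)

end GWalk

/-- Graphical separation: `A ⊥_G B | C` holds if there is no connecting walk given `C`
between a node of `A` and a node of `B`. -/
def MixedGraph.Sep {V : Type u} (G : MixedGraph V) (A B C : Set V) : Prop :=
  ¬ ∃ w : GWalk G, w.node 0 ∈ A ∧ w.node w.len ∈ B ∧ w.ConnectingGiven C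

/-- A primitive inducing path between `i` and `j`. -/
def PrimitiveInducingPath {V : Type u} (G : MixedGraph V) (i j : V) : Prop :=
  ∃ w : GWalk G, 2 ≤ w.len ∧ w.node 0 = i ∧ w.node w.len = j ∧
    (∀ m, 0 < m → m < w.len → w.node m ∈ G.ant {i, j}) ∧
    (∀ k, 1 ≤ k → k + 1 < w.len → (w.kind k = EdgeKind.bidirE ∨ w.kind k = EdgeKind.undirE)) ∧
    (w.kind 0 = EdgeKind.bidirE ∨ w.kind 0 = EdgeKind.dirR) ∧
    (w.kind (w.len - 1) = EdgeKind.bidirE ∨ w.kind (w.len - 1) = EdgeKind.dirL)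

/-- A mixed graph is maximal if every pair of non-adjacent nodes can be separated by some set. -/
def IsMaximal {V : Type u} (G : MixedGraph V) : Prop :=
  ∀ i j : V, i ≠ j → ¬ G.Adj i j → ∃ C : Set V, i ∉ C ∧ j ∉ C ∧ G.Sep {i} {j} C

/-! ## Independence models -/

/-- Pairwise disjointness of three sets. -/
def Disjoint3 {V : Type u} (A B C : Set V) : Prop :=
  Disjoint A B ∧ Disjoint A C ∧ Disjoint B C

/-- A compositional graphoid: an independence model over `V` satisfying symmetry,
decomposition, weak union, contraction, intersection and composition. -/
structure IsCompositionalGraphoid {V : Type u} (J : Set V → Set V → Set V → Prop) : Prop where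
  symm : ∀ A B C : Set V, Disjoint3 A B C → J A B C → J B A C
  decomposition : ∀ A B C D : Set V, Disjoint3 A (B ∪ D) C → J A (B ∪ D) C → J A B C
  weakUnion : ∀ A B C D : Set V, Disjoint3 A (B ∪ D) C → J A (B ∪ D) C → J A B (C ∪ D)
  contraction : ∀ A B C D : Set V, Disjoint3 A B (C ∪ D) → Disjoint3 A D C →
    J A B (C ∪ D) → J A D C → J A (B ∪ D) C
  intersection : ∀ A B C D : Set V, Disjoint3 A B (C ∪ D) → Disjoint3 A D (C ∪ B) →
    J A B (C ∪ D) → J A D (C ∪ B) → J A (B ∪ D) C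
  composition : ∀ A B C D : Set V, Disjoint3 A B C → Disjoint3 A D C →
    J A B C → J A D C → J A (B ∪ D) C

/-- An independence model `J` is Markovian to a mixed graph `G` if every graphical
separation implies the corresponding independence statement. -/
def MarkovTo {V : Type u} (J : Set V → Set V → Set V → Prop) (G : MixedGraph V) : Prop :=
  ∀ A B C : Set V, Disjoint3 A B C → G.Sep A B C → J A B C

/-! ## Graphical interventions -/

/-- The intervened graph `do_C(G)`: for every `i ∈ C`, each undirected edge `i — j` with
`j ∉ C` is replaced by the directed edge `i → j`, undirected edges within `C` are removed,
all directed edges pointing into `i` are removed, and all bidirected edges incident to `i`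
are removed. -/
def doGraph {V : Type*} (G : MixedGraph V) (C : Set V) : MixedGraph V where
  dir i j := (G.dir i j ∧ j ∉ C) ∨ (G.Undir i j ∧ i ∈ C ∧ j ∉ C)
  undir i j := G.undir i j ∧ i ∉ C ∧ j ∉ C
  bidir i j := G.bidir i j ∧ i ∉ C ∧ j ∉ C

/-! ## Counterfactual graphs -/

/-- A node `i ∉ C` of `G` such that `ant(i) ∩ C = ∅` gets merged with its intervened copy
in the counterfactual graph; the intervened copy `i^{do(C)}` is kept exactly when
`CFKeep G C i` holds. -/
def CFKeep {V : Type*} (G : MixedGraph V) (C : Set V) (i : V) : Prop :=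
  i ∈ C ∨ (G.ant {i} ∩ C).Nonempty

/-- The node set of the counterfactual graph `φ(G; C)`: observational nodes `Sum.inl i`
(for all `i ∈ V`, with merged nodes represented by their observational copy) and
intervened nodes `Sum.inr i` for the kept nodes `i^{do(C)}`. -/
abbrev CFNode {V : Type*} (G : MixedGraph V) (C : Set V) : Type _ :=
  V ⊕ {i : V // CFKeep G C i}

/-- The extra bidirected edges of the counterfactual graph between a kept intervened node
`j^{do(C)}` (with `j ∉ C`) and an observational node `i`: `j^{do(C)} ↔ j`,
`j^{do(C)} ↔ i` for `i ↔ j` in `G`, and `j^{do(C)} ↔ i` for `i ∈ τ(j) \ {j}`. -/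
def crossBidir {V : Type*} (G : MixedGraph V) (C : Set V) (i jv : V) : Prop :=
  jv ∉ C ∧ (i = jv ∨ G.Bidir jv i ∨ (i ∈ G.ChainComp jv ∧ i ≠ jv))

/-- The counterfactual graph `φ(G; C)`: the disjoint union of `G` and of `do_C(G)` with
nodes relabelled, in which each intervened node `i^{do(C)}` with `i ∉ C` and
`ant_G(i) ∩ C = ∅` is merged into the observational node `i` (edges being rerouted
accordingly), and bidirected edges are added between kept intervened nodes `i^{do(C)}`
(`i ∉ C`) and the observational nodes `i`, the nodes `j` with `i ↔ j` in `G`, and the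
nodes `j ∈ τ_G(i) \ {i}`. -/
def phiGraph {V : Type*} (G : MixedGraph V) (C : Set V) : MixedGraph (CFNode G C) where
  dir u v :=
    match u, v with
    | .inl i, .inl j => G.dir i j ∨ (¬ CFKeep G C i ∧ ¬ CFKeep G C j ∧ (doGraph G C).dir i j)
    | .inl i, .inr j => ¬ CFKeep G C i ∧ (doGraph G C).dir i j.1
    | .inr i, .inl j => ¬ CFKeep G C j ∧ (doGraph G C).dir i.1 j
    | .inr i, .inr j => (doGraph G C).dir i.1 j.1
  undir u v :=
    match u, v with
    | .inl i, .inl j => G.undir i j ∨ (¬ CFKeep G C i ∧ ¬ CFKeep G C j ∧ (doGraph G C).undir i j)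
    | .inl i, .inr j => ¬ CFKeep G C i ∧ (doGraph G C).undir i j.1
    | .inr i, .inl j => ¬ CFKeep G C j ∧ (doGraph G C).undir i.1 j
    | .inr i, .inr j => (doGraph G C).undir i.1 j.1
  bidir u v :=
    match u, v with
    | .inl i, .inl j => G.bidir i j ∨ (¬ CFKeep G C i ∧ ¬ CFKeep G C j ∧ (doGraph G C).bidir i j)
    | .inl i, .inr j => (¬ CFKeep G C i ∧ (doGraph G C).bidir i j.1) ∨ crossBidir G C i j.1
    | .inr i, .inl j => (¬ CFKeep G C j ∧ (doGraph G C).bidir i.1 j) ∨ crossBidir G C j i.1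
    | .inr i, .inr j => (doGraph G C).bidir i.1 j.1

/-! Every semi-directed step of `do_C(G)` is one of `G`, and none of them enters `C`. Hence a
semi-directed cycle of `do_C(G)` either is one of `G` or starts with a new edge `i → j` out of
`i ∈ C`, which it could never return to. The undirected and bidirected edges of `do_C(G)` are
those of `G` avoiding `C`, so bidirected edges and chain components only shrink. -/

namespace MixedGraph

variable {V : Type*} (G : MixedGraph V) (C : Set V)

lemma undir_of_doGraph {a b : V} (h : (doGraph G C).Undir a b) :
    G.Undir a b ∧ a ∉ C ∧ b ∉ C := by
  rcases h with ⟨h, ha, hb⟩ | ⟨h, hb, ha⟩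
  · exact ⟨Or.inl h, ha, hb⟩
  · exact ⟨Or.inr h, ha, hb⟩

lemma bidir_of_doGraph {a b : V} (h : (doGraph G C).Bidir a b) :
    G.Bidir a b ∧ a ∉ C ∧ b ∉ C := by
  rcases h with ⟨h, ha, hb⟩ | ⟨h, hb, ha⟩
  · exact ⟨Or.inl h, ha, hb⟩
  · exact ⟨Or.inr h, ha, hb⟩

lemma sdStep_of_doGraph {a b : V} (h : (doGraph G C).sdStep a b) : G.sdStep a b := by
  rcases h with (⟨h, _⟩ | ⟨h, _, _⟩) | h
  · exact Or.inl h
  · exact Or.inr h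
  · exact Or.inr (G.undir_of_doGraph C h).1

lemma semiDirReach_of_doGraph {a b : V} (h : (doGraph G C).SemiDirReach a b) :
    G.SemiDirReach a b :=
  Relation.ReflTransGen.mono (fun _ _ => G.sdStep_of_doGraph C) _ _ h

lemma not_sdStep_doGraph_of_mem {a b : V} (hb : b ∈ C) : ¬ (doGraph G C).sdStep a b := by
  rintro ((⟨_, h⟩ | ⟨_, _, h⟩) | h)
  · exact h hb
  · exact h hb
  · exact (G.undir_of_doGraph C h).2.2 hb

lemma eq_of_semiDirReach_doGraph_of_mem {a b : V} (h : (doGraph G C).SemiDirReach a b)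
    (hb : b ∈ C) : a = b := by
  rcases h.cases_tail with h | ⟨c, _, hs⟩
  · exact h.symm
  · exact absurd hs (G.not_sdStep_doGraph_of_mem C hb)

lemma mem_chainComp_of_doGraph {j k : V} (hk : k ∈ (doGraph G C).ChainComp j) (hj : j ∉ C) :
    k ∈ G.ChainComp j ∧ k ∉ C := by
  induction hk with
  | refl => exact ⟨.refl, hj⟩
  | tail _ hstep ih =>
    obtain ⟨hu, -, hc⟩ := G.undir_of_doGraph C hstep
    exact ⟨ih.1.tail hu, hc⟩

variable {G}

lemma isCMG_doGraph (hG : G.IsCMG) : (doGraph G C).IsCMG := by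
  rintro ⟨a, b, (⟨hab, -⟩ | ⟨-, ha, hb⟩), hba⟩
  · exact hG ⟨a, b, hab, G.semiDirReach_of_doGraph C hba⟩
  · exact hb (G.eq_of_semiDirReach_doGraph_of_mem C hba ha ▸ ha)

lemma isAnterial_doGraph (hG : G.IsAnterial) : (doGraph G C).IsAnterial :=
  ⟨isCMG_doGraph C hG.1, fun a b hab hr =>
    hG.2 a b (G.bidir_of_doGraph C hab).1 (G.semiDirReach_of_doGraph C hr)⟩

lemma chainConnected_doGraph (hG : G.ChainConnected) : (doGraph G C).ChainConnected := by
  intro i j k hij hk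
  obtain ⟨hij, hi, hj⟩ := G.bidir_of_doGraph C hij
  obtain ⟨hk, hkC⟩ := G.mem_chainComp_of_doGraph C hk hj
  rcases hG i j k hij hk with h | h
  · exact Or.inl ⟨h, hi, hkC⟩
  · exact Or.inr ⟨h, hkC, hi⟩

end MixedGraph

theorem statement_7_general {V : Type*} (G : MixedGraph V)
    (hant : G.IsAnterial) (hcc : G.ChainConnected) (C : Set V) :
    (doGraph G C).IsAnterial ∧ (doGraph G C).ChainConnected :=
  ⟨MixedGraph.isAnterial_doGraph C hant, MixedGraph.chainConnected_doGraph C hcc⟩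

/-- If `G` is a chain-connected anterial graph then so is the intervened graph
`do_C(G)`. -/
theorem statement_7 {V : Type*} [Fintype V] (G : MixedGraph V)
    (hant : G.IsAnterial) (hcc : G.ChainConnected) (C : Set V) :
    (doGraph G C).IsAnterial ∧ (doGraph G C).ChainConnected :=
  statement_7_general G hant hcc C
end

section
/- Let G be a chain-connected anterial graph over a finite node set V and let C ⊆ V. Then the counterfactual graph φ(G;C) is a chain-connected anterial graph. -/
open MeasureTheory

universe u v w

/-!
Projecting `φ(G; C)` onto `V` maps semi-directed steps to semi-directed steps of `G`, since
`do_C(G)` only deletes edges and orients undirected edges away from `C`. The intervened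
copies of the kept nodes, which are the nodes reachable from `C`, cannot be left along a
semi-directed path, and neither can the observational copies of kept nodes; so a
semi-directed cycle, or a semi-directed path between the ends of a bidirected edge, projects
to one in `G` or in `do_C(G)`, or starts at an observational kept node and ends at an
intervened one. For chain-connectedness, the observational nodes joined to `i^{do(C)}` by an
added bidirected edge are those of `τ(i)` and the bidirected neighbours of `i`, a union of
chain components of `G` when `G` is chain-connected.
-/

theorem Relation.ReflTransGen.exists_preimage {α β : Type*} {r : β → β → Prop}
    {s : α → α → Prop} {f : α → β} (h : ∀ a b, r (f a) b → ∃ a', b = f a' ∧ s a a')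
    {a : α} {b : β} (hab : Relation.ReflTransGen r (f a) b) :
    ∃ a', b = f a' ∧ Relation.ReflTransGen s a a' := by
  induction hab with
  | refl => exact ⟨a, rfl, .refl⟩
  | tail _ hbc ih =>
    obtain ⟨a', rfl, ha'⟩ := ih
    obtain ⟨a'', rfl, hs⟩ := h a' _ hbc
    exact ⟨a'', rfl, ha'.tail hs⟩

namespace MixedGraph

variable {V : Type*} {G : MixedGraph V} {i j k : V}

theorem bidir_comm : G.Bidir i j ↔ G.Bidir j i := Or.comm

theorem mem_chainComp_comm : i ∈ G.ChainComp j ↔ j ∈ G.ChainComp i := by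
  suffices symm : ∀ {a b : V}, a ∈ G.ChainComp b → b ∈ G.ChainComp a from ⟨symm, symm⟩
  exact fun h =>
    Relation.reflTransGen_swap.mp (Relation.ReflTransGen.mono (fun _ _ => Or.symm) _ _ h)

theorem mem_chainComp_trans (hij : i ∈ G.ChainComp j) (hjk : j ∈ G.ChainComp k) :
    i ∈ G.ChainComp k :=
  Relation.ReflTransGen.trans hjk hij

theorem semiDirReach_of_mem_chainComp (h : j ∈ G.ChainComp i) : G.SemiDirReach i j :=
  Relation.ReflTransGen.mono (fun _ _ => Or.inr) _ _ h

theorem ChainConnected.bidir_of_mem_chainComp_left (hcc : G.ChainConnected)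
    (h : G.Bidir i j) (hk : k ∈ G.ChainComp i) : G.Bidir k j :=
  bidir_comm.mp (hcc j i k (bidir_comm.mp h) hk)

end MixedGraph

open MixedGraph

section Intervention

variable {V : Type*} {G : MixedGraph V} {C : Set V} {i j k : V}

theorem doGraph_undir_iff : (doGraph G C).Undir i j ↔ G.Undir i j ∧ i ∉ C ∧ j ∉ C := by
  simp only [MixedGraph.Undir, doGraph]
  tauto

theorem doGraph_bidir_iff : (doGraph G C).Bidir i j ↔ G.Bidir i j ∧ i ∉ C ∧ j ∉ C := by
  simp only [MixedGraph.Bidir, doGraph]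
  tauto

theorem doGraph_dir_of_not_mem (h : (doGraph G C).dir i j) (hi : i ∉ C) : G.dir i j := by
  rcases h with ⟨h, -⟩ | ⟨-, hiC, -⟩
  exacts [h, absurd hiC hi]

theorem sdStep_of_doGraph_sdStep (h : (doGraph G C).sdStep i j) : G.sdStep i j ∧ j ∉ C := by
  rcases h with (⟨h, hj⟩ | ⟨h, -, hj⟩) | h
  · exact ⟨Or.inl h, hj⟩
  · exact ⟨Or.inr h, hj⟩
  · obtain ⟨h, -, hj⟩ := doGraph_undir_iff.mp h
    exact ⟨Or.inr h, hj⟩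

theorem semiDirReach_of_doGraph_semiDirReach (h : (doGraph G C).SemiDirReach i j) :
    G.SemiDirReach i j :=
  Relation.ReflTransGen.mono (fun _ _ h => (sdStep_of_doGraph_sdStep h).1) _ _ h

theorem eq_of_doGraph_semiDirReach_of_mem (h : (doGraph G C).SemiDirReach i j) (hj : j ∈ C) :
    j = i := by
  rcases h.cases_tail with h | ⟨_, -, hstep⟩
  exacts [h, absurd hj (sdStep_of_doGraph_sdStep hstep).2]

theorem MixedGraph.IsCMG.doGraph (hG : G.IsCMG) : (doGraph G C).IsCMG := by
  rintro ⟨a, b, hab, hba⟩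
  rcases hab with ⟨hab, -⟩ | ⟨-, ha, hb⟩
  · exact hG ⟨a, b, hab, semiDirReach_of_doGraph_semiDirReach hba⟩
  · exact hb (eq_of_doGraph_semiDirReach_of_mem hba ha ▸ ha)

theorem mem_chainComp_of_mem_doGraph_chainComp (h : k ∈ (doGraph G C).ChainComp j) :
    k ∈ G.ChainComp j :=
  Relation.ReflTransGen.mono (fun _ _ h => (doGraph_undir_iff.mp h).1) _ _ h

theorem not_mem_of_mem_doGraph_chainComp (h : k ∈ (doGraph G C).ChainComp j) (hj : j ∉ C) :
    k ∉ C := by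
  rcases h.cases_tail with rfl | ⟨_, -, hstep⟩
  exacts [hj, (doGraph_undir_iff.mp hstep).2.2]

theorem MixedGraph.ChainConnected.doGraph (hcc : G.ChainConnected) :
    (doGraph G C).ChainConnected := by
  intro i j k hij hk
  obtain ⟨hij, hi, hj⟩ := doGraph_bidir_iff.mp hij
  exact doGraph_bidir_iff.mpr ⟨hcc i j k hij (mem_chainComp_of_mem_doGraph_chainComp hk), hi,
    not_mem_of_mem_doGraph_chainComp hk hj⟩

end Intervention

section Keep

variable {V : Type*} {G : MixedGraph V} {C : Set V} {i j k : V}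

theorem cfKeep_iff : CFKeep G C i ↔ ∃ x ∈ C, G.SemiDirReach x i := by
  constructor
  · rintro (hi | ⟨x, ⟨-, _, rfl, hx⟩, hxC⟩)
    exacts [⟨i, hi, .refl⟩, ⟨x, hxC, hx⟩]
  · rintro ⟨x, hxC, hx⟩
    by_cases hxi : x = i
    · exact Or.inl (hxi ▸ hxC)
    · exact Or.inr ⟨x, ⟨hxi, i, rfl, hx⟩, hxC⟩

theorem CFKeep.of_semiDirReach (hi : CFKeep G C i) (h : G.SemiDirReach i j) : CFKeep G C j :=
  let ⟨x, hxC, hx⟩ := cfKeep_iff.mp hi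
  cfKeep_iff.mpr ⟨x, hxC, hx.trans h⟩

theorem not_mem_of_not_cfKeep (h : ¬ CFKeep G C i) : i ∉ C := fun hi => h (Or.inl hi)

theorem crossBidir_iff : crossBidir G C i j ↔ j ∉ C ∧ (i ∈ G.ChainComp j ∨ G.Bidir j i) := by
  refine and_congr_right fun _ => ?_
  by_cases hij : i = j
  · subst hij
    exact iff_of_true (Or.inl rfl) (Or.inl Relation.ReflTransGen.refl)
  · simp only [hij, ne_eq, not_false_eq_true, and_true, false_or]
    exact or_comm

theorem MixedGraph.ChainConnected.crossBidir_of_mem_chainComp_left (hcc : G.ChainConnected)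
    (h : crossBidir G C j i) (hk : k ∈ G.ChainComp j) : crossBidir G C k i := by
  obtain ⟨hi, hji | hij⟩ := crossBidir_iff.mp h
  exacts [crossBidir_iff.mpr ⟨hi, Or.inl (mem_chainComp_trans hk hji)⟩,
    crossBidir_iff.mpr ⟨hi, Or.inr (hcc i j k hij hk)⟩]

theorem MixedGraph.ChainConnected.crossBidir_of_mem_chainComp_right (hcc : G.ChainConnected)
    (h : crossBidir G C i j) (hk : k ∈ G.ChainComp j) (hkC : k ∉ C) :
    crossBidir G C i k := by
  obtain ⟨-, hij | hji⟩ := crossBidir_iff.mp h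
  exacts [crossBidir_iff.mpr
      ⟨hkC, Or.inl (mem_chainComp_trans hij (mem_chainComp_comm.mp hk))⟩,
    crossBidir_iff.mpr ⟨hkC, Or.inr (hcc.bidir_of_mem_chainComp_left hji hk)⟩]

end Keep

section Counterfactual

variable {V : Type*} {G : MixedGraph V} {C : Set V} {i j : V}
  {a b : {i : V // CFKeep G C i}} {u v w : CFNode G C}

def cfProj (G : MixedGraph V) (C : Set V) : CFNode G C → V := Sum.elim id Subtype.val

theorem phiGraph_undir_inl_inl : (phiGraph G C).Undir (.inl i) (.inl j) ↔ G.Undir i j := by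
  simp only [MixedGraph.Undir, phiGraph, doGraph]
  tauto

theorem phiGraph_dir_inl_inl : (phiGraph G C).dir (.inl i) (.inl j) ↔ G.dir i j :=
  ⟨fun h => h.elim id fun h => doGraph_dir_of_not_mem h.2.2 (not_mem_of_not_cfKeep h.1), Or.inl⟩

theorem phiGraph_sdStep_inl_inl :
    (phiGraph G C).sdStep (.inl i) (.inl j) ↔ G.sdStep i j :=
  or_congr phiGraph_dir_inl_inl phiGraph_undir_inl_inl

theorem phiGraph_bidir_inl_inl : (phiGraph G C).Bidir (.inl i) (.inl j) ↔ G.Bidir i j := by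
  simp only [MixedGraph.Bidir, phiGraph, doGraph]
  tauto

theorem phiGraph_bidir_inl_inr :
    (phiGraph G C).Bidir (.inl i) (.inr a) ↔
      (¬ CFKeep G C i ∧ (doGraph G C).Bidir i a) ∨ crossBidir G C i a := by
  simp only [MixedGraph.Bidir, phiGraph]
  tauto

theorem not_phiGraph_undir_inl_inr : ¬ (phiGraph G C).Undir (.inl i) (.inr a) := by
  rintro (⟨hi, h, -⟩ | ⟨hi, h, -⟩)
  · exact hi (a.2.of_semiDirReach (.single (Or.inr (Or.inr h))))
  · exact hi (a.2.of_semiDirReach (.single (Or.inr (Or.inl h))))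

theorem not_phiGraph_sdStep_inr_inl : ¬ (phiGraph G C).sdStep (.inr a) (.inl i) := by
  rintro (⟨hi, h⟩ | h)
  · exact hi (a.2.of_semiDirReach (.single (sdStep_of_doGraph_sdStep (Or.inl h)).1))
  · exact not_phiGraph_undir_inl_inr (Or.symm h)

theorem not_cfKeep_of_phiGraph_sdStep_inl_inr (h : (phiGraph G C).sdStep (.inl i) (.inr a)) :
    ¬ CFKeep G C i := by
  rcases h with ⟨hi, -⟩ | h
  exacts [hi, absurd h not_phiGraph_undir_inl_inr]

theorem sdStep_cfProj_of_phiGraph_sdStep (h : (phiGraph G C).sdStep u v) :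
    G.sdStep (cfProj G C u) (cfProj G C v) := by
  rcases u with i | a <;> rcases v with j | b
  · exact phiGraph_sdStep_inl_inl.mp h
  · rcases h with ⟨-, h⟩ | h
    · exact (sdStep_of_doGraph_sdStep (Or.inl h)).1
    · exact absurd h not_phiGraph_undir_inl_inr
  · exact absurd h not_phiGraph_sdStep_inr_inl
  · exact (sdStep_of_doGraph_sdStep h).1

theorem semiDirReach_cfProj_of_phiGraph_semiDirReach (h : (phiGraph G C).SemiDirReach u v) :
    G.SemiDirReach (cfProj G C u) (cfProj G C v) :=
  h.lift (cfProj G C) fun _ _ => sdStep_cfProj_of_phiGraph_sdStep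

theorem exists_of_phiGraph_semiDirReach_inr (h : (phiGraph G C).SemiDirReach (.inr a) w) :
    ∃ b, w = .inr b ∧ (doGraph G C).SemiDirReach a b := by
  have step : ∀ a w, (phiGraph G C).sdStep (.inr a) w →
      ∃ b, w = .inr b ∧ (doGraph G C).sdStep a.1 b.1 := by
    rintro a (j | b) h
    exacts [absurd h not_phiGraph_sdStep_inr_inl, ⟨b, rfl, h⟩]
  obtain ⟨b, rfl, hab⟩ := Relation.ReflTransGen.exists_preimage step h
  exact ⟨b, rfl, hab.lift Subtype.val fun _ _ => id⟩

theorem not_cfKeep_of_phiGraph_semiDirReach_inl_inr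
    (h : (phiGraph G C).SemiDirReach (.inl i) (.inr a)) : ¬ CFKeep G C i := by
  intro hi
  have step : ∀ (k : {i : V // CFKeep G C i}) w, (phiGraph G C).sdStep (.inl k.1) w →
      ∃ m : {i : V // CFKeep G C i}, w = .inl m.1 ∧ G.sdStep k m := by
    rintro k (j | b) h
    · have hkj := phiGraph_sdStep_inl_inl.mp h
      exact ⟨⟨j, k.2.of_semiDirReach (.single hkj)⟩, rfl, hkj⟩
    · exact absurd k.2 (not_cfKeep_of_phiGraph_sdStep_inl_inr h)
  obtain ⟨_, hw, -⟩ := Relation.ReflTransGen.exists_preimage step (a := ⟨i, hi⟩) h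
  exact Sum.inr_ne_inl hw

theorem exists_of_mem_phiGraph_chainComp_inl (h : w ∈ (phiGraph G C).ChainComp (.inl j)) :
    ∃ k ∈ G.ChainComp j, w = .inl k := by
  have step : ∀ k w, (phiGraph G C).Undir (.inl k) w → ∃ m, w = .inl m ∧ G.Undir k m := by
    rintro k (m | b) h
    · exact ⟨m, rfl, phiGraph_undir_inl_inl.mp h⟩
    · exact absurd h not_phiGraph_undir_inl_inr
  obtain ⟨k, rfl, hk⟩ := Relation.ReflTransGen.exists_preimage step h
  exact ⟨k, hk, rfl⟩

theorem exists_of_mem_phiGraph_chainComp_inr (h : w ∈ (phiGraph G C).ChainComp (.inr a)) :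
    ∃ b, b.1 ∈ (doGraph G C).ChainComp a ∧ w = .inr b := by
  have step : ∀ a w, (phiGraph G C).Undir (.inr a) w →
      ∃ b, w = .inr b ∧ (doGraph G C).Undir a.1 b.1 := by
    rintro a (j | b) h
    exacts [absurd (Or.symm h) not_phiGraph_undir_inl_inr, ⟨b, rfl, h⟩]
  obtain ⟨b, rfl, hab⟩ := Relation.ReflTransGen.exists_preimage step h
  exact ⟨b, hab.lift Subtype.val fun _ _ => id, rfl⟩

theorem MixedGraph.IsCMG.phiGraph (hG : G.IsCMG) : (phiGraph G C).IsCMG := by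
  rintro ⟨u, v, huv, hvu⟩
  rcases u with i | a <;> rcases v with j | b
  · exact hG ⟨i, j, phiGraph_dir_inl_inl.mp huv,
      semiDirReach_cfProj_of_phiGraph_semiDirReach hvu⟩
  · obtain ⟨_, h, -⟩ := exists_of_phiGraph_semiDirReach_inr hvu
    exact Sum.inl_ne_inr h
  · exact not_phiGraph_sdStep_inr_inl (Or.inl huv)
  · obtain ⟨_, h, hba⟩ := exists_of_phiGraph_semiDirReach_inr hvu
    cases Sum.inr_injective h
    exact hG.doGraph ⟨a, b, huv, hba⟩

theorem phiGraph_not_semiDirReach_of_bidir (hG : ∀ i j, G.Bidir i j → ¬ G.SemiDirReach i j)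
    (huv : (phiGraph G C).Bidir u v) : ¬ (phiGraph G C).SemiDirReach u v := by
  intro hr
  have hproj := semiDirReach_cfProj_of_phiGraph_semiDirReach hr
  rcases u with i | a <;> rcases v with j | b
  · exact hG i j (phiGraph_bidir_inl_inl.mp huv) hproj
  · have hi := not_cfKeep_of_phiGraph_semiDirReach_inl_inr hr
    rcases phiGraph_bidir_inl_inr.mp huv with ⟨-, hib⟩ | hcross
    · exact hG i b (doGraph_bidir_iff.mp hib).1 hproj
    · rcases (crossBidir_iff.mp hcross).2 with hmem | hbi
      · exact hi (b.2.of_semiDirReach (semiDirReach_of_mem_chainComp hmem))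
      · exact hG i b (bidir_comm.mp hbi) hproj
  · obtain ⟨_, h, -⟩ := exists_of_phiGraph_semiDirReach_inr hr
    exact Sum.inl_ne_inr h
  · exact hG a b (doGraph_bidir_iff.mp huv).1 hproj

theorem MixedGraph.IsAnterial.phiGraph (hG : G.IsAnterial) : (phiGraph G C).IsAnterial :=
  ⟨hG.1.phiGraph, fun _ _ => phiGraph_not_semiDirReach_of_bidir hG.2⟩

theorem MixedGraph.ChainConnected.phiGraph (hcc : G.ChainConnected) :
    (phiGraph G C).ChainConnected := by
  intro u v w huv hw
  rcases v with j | b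
  · obtain ⟨k, hk, rfl⟩ := exists_of_mem_phiGraph_chainComp_inl hw
    rcases u with i | a
    · exact phiGraph_bidir_inl_inl.mpr (hcc i j k (phiGraph_bidir_inl_inl.mp huv) hk)
    · rw [bidir_comm, phiGraph_bidir_inl_inr] at huv ⊢
      rcases huv with ⟨hj, hja⟩ | hcross
      · have hk' : ¬ CFKeep G C k := fun hk' =>
          hj (hk'.of_semiDirReach (semiDirReach_of_mem_chainComp (mem_chainComp_comm.mp hk)))
        obtain ⟨hja, -, ha⟩ := doGraph_bidir_iff.mp hja
        exact Or.inl ⟨hk', doGraph_bidir_iff.mpr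
          ⟨hcc.bidir_of_mem_chainComp_left hja hk, not_mem_of_not_cfKeep hk', ha⟩⟩
      · exact Or.inr (hcc.crossBidir_of_mem_chainComp_left hcross hk)
  · obtain ⟨c, hc, rfl⟩ := exists_of_mem_phiGraph_chainComp_inr hw
    rcases u with i | a
    · rw [phiGraph_bidir_inl_inr] at huv ⊢
      rcases huv with ⟨hi, hib⟩ | hcross
      · exact Or.inl ⟨hi, hcc.doGraph i b c hib hc⟩
      · exact Or.inr (hcc.crossBidir_of_mem_chainComp_right hcross
          (mem_chainComp_of_mem_doGraph_chainComp hc)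
          (not_mem_of_mem_doGraph_chainComp hc (crossBidir_iff.mp hcross).1))
    · exact hcc.doGraph a b c huv hc

end Counterfactual

theorem statement_8_general {V : Type*} (G : MixedGraph V)
    (hant : G.IsAnterial) (hcc : G.ChainConnected) (C : Set V) :
    (phiGraph G C).IsAnterial ∧ (phiGraph G C).ChainConnected :=
  ⟨hant.phiGraph, hcc.phiGraph⟩

/-- If `G` is a chain-connected anterial graph then so is the counterfactual graph
`φ(G; C)`. -/
theorem statement_8 {V : Type*} [Fintype V] (G : MixedGraph V)
    (hant : G.IsAnterial) (hcc : G.ChainConnected) (C : Set V) :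
    (phiGraph G C).IsAnterial ∧ (phiGraph G C).ChainConnected :=
  statement_8_general G hant hcc C
end

section
/- Let G be a mixed graph over a finite node set V, let L ⊆ U ⊆ V, and let i and j be distinct nodes of V ∖ U. Let W = (U ∖ L) ∪ {i,j}, and suppose H is a maximal mixed graph over the node set W such that for all pairwise disjoint subsets A,B,D ⊆ W one has A ⊥_H B | D if and only if A ⊥_G B | (D ∪ L). Then i and j are non-adjacent in H if and only if there exists a set S with L ⊆ S ⊆ U and {i} ⊥_G {j} | S. -/
open MeasureTheory

universe u v w

lemma adj_not_sep {V : Type u} (G : MixedGraph V) {a b : V} (h : G.Adj a b) {C : Set V}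
    (ha : a ∉ C) (hb : b ∉ C) : ¬ G.Sep {a} {b} C := by
  intro hsep
  obtain ⟨k, hk⟩ : ∃ k, G.edgeHolds k a b := by
    rcases h with h | h | h | h
    exacts [⟨.dirR, h⟩, ⟨.dirL, h⟩, ⟨.undirE, h⟩, ⟨.bidirE, h⟩]
  refine hsep ⟨⟨1, fun m => if m = 0 then a else b, fun _ => k, ?_⟩, ?_, ?_, ?_⟩
  · intro m hm
    interval_cases m
    simpa using hk
  · simp
  · simp
  · intro s t _
    constructor
    · rintro ⟨⟨hst, _, _⟩, hs0, ht1, _⟩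
      have ht1' : t < 1 := ht1
      omega
    · intro _ m _ _
      by_cases hm : m = 0 <;> simp [hm, ha, hb]

/-! ## Statement 9 -/

/-- Let `G` be a mixed graph over `V`, `L ⊆ U ⊆ V` and let `i ≠ j` be nodes of `V \ U`.
Let `W = (U \ L) ∪ {i, j}` and suppose `H` is a maximal mixed graph over `W` whose
separations are exactly the separations `A ⊥_G B | (D ∪ L)` of `G`. Then `i` and `j` are
non-adjacent in `H` if and only if there exists a set `S` with `L ⊆ S ⊆ U` and
`{i} ⊥_G {j} | S`. -/
theorem statement_9 {V : Type*} [Fintype V] (G : MixedGraph V) (L U : Set V)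
    (hLU : L ⊆ U) (i j : V) (hij : i ≠ j) (hiU : i ∉ U) (hjU : j ∉ U)
    (H : MixedGraph ↥((U \ L) ∪ {i, j} : Set V)) (hmax : IsMaximal H)
    (hsep : ∀ A B D : Set ↥((U \ L) ∪ {i, j} : Set V), Disjoint3 A B D →
      (H.Sep A B D ↔ G.Sep (Subtype.val '' A) (Subtype.val '' B) (Subtype.val '' D ∪ L))) :
    ¬ H.Adj ⟨i, by simp⟩ ⟨j, by simp⟩ ↔
      ∃ S : Set V, L ⊆ S ∧ S ⊆ U ∧ G.Sep {i} {j} S := by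
  
  have hiW : i ∈ ((U \ L) ∪ {i, j} : Set V) := by simp
  have hjW : j ∈ ((U \ L) ∪ {i, j} : Set V) := by simp
  have hijW : (⟨i, hiW⟩ : ↥((U \ L) ∪ {i, j} : Set V)) ≠ ⟨j, hjW⟩ := by
    simp [Subtype.ext_iff, hij]
  constructor
  · intro hnadj
    obtain ⟨D, hiD, hjD, hDsep⟩ := hmax _ _ hijW hnadj
    have hdisj : Disjoint3 {(⟨i, hiW⟩ : ↥((U \ L) ∪ {i, j} : Set V))} {⟨j, hjW⟩} D := by
      refine ⟨?_, ?_, ?_⟩ <;> simp [Set.disjoint_singleton_left, hijW, hiD, hjD]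
    have hG := (hsep _ _ _ hdisj).mp hDsep
    refine ⟨Subtype.val '' D ∪ L, Set.subset_union_right, ?_, ?_⟩
    · rintro x (⟨y, hyD, rfl⟩ | hx)
      · rcases y.2 with h | h
        · exact h.1
        · exfalso
          rcases h with h | h
          · exact hiD (by rwa [show (⟨i, hiW⟩ : ↥((U \ L) ∪ {i, j} : Set V)) = y from
              (Subtype.ext h.symm)])
          · exact hjD (by rwa [show (⟨j, hjW⟩ : ↥((U \ L) ∪ {i, j} : Set V)) = y from
              (Subtype.ext h.symm)])
      · exact hLU hx
    · simpa [Set.image_singleton] using hG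
  · rintro ⟨S, hLS, hSU, hSsep⟩ hadj
    set D : Set ↥((U \ L) ∪ {i, j} : Set V) := {x | x.val ∈ S} with hD
    have hiD : (⟨i, hiW⟩ : ↥((U \ L) ∪ {i, j} : Set V)) ∉ D := fun h => hiU (hSU h)
    have hjD : (⟨j, hjW⟩ : ↥((U \ L) ∪ {i, j} : Set V)) ∉ D := fun h => hjU (hSU h)
    have hdisj : Disjoint3 {(⟨i, hiW⟩ : ↥((U \ L) ∪ {i, j} : Set V))} {⟨j, hjW⟩} D := by
      refine ⟨?_, ?_, ?_⟩ <;> simp [Set.disjoint_singleton_left, hijW, hiD, hjD]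
    have hval : Subtype.val '' D ∪ L = S := by
      apply Set.Subset.antisymm
      · rintro x (⟨y, hy, rfl⟩ | hx)
        exacts [hy, hLS hx]
      · intro x hxS
        by_cases hxL : x ∈ L
        · exact Or.inr hxL
        · exact Or.inl ⟨⟨x, Or.inl ⟨hSU hxS, hxL⟩⟩, hxS, rfl⟩
    have hHsep := (hsep {⟨i, hiW⟩} {⟨j, hjW⟩} D hdisj).mpr
      (by rw [Set.image_singleton, Set.image_singleton, hval]; exact hSsep)
    exact adj_not_sep H hadj hiD hjD hHsep
end

section
/- Let G be a chain-connected anterial graph over a finite node set V and let G_col be its collapsed graph over the chain components of G. Then: no pair of distinct chain components is joined in G_col by both a directed and a bidirected edge; G_col contains only directed and bidirected edges (no undirected edges); G_col contains no directed cycle; and there is no bidirected edge of G_col whose two endpoints are joined by a directed path in G_col. In particular, G_col is an ancestral graph. -/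
open MeasureTheory

universe u v w

/-! ## The collapsed graph -/

/-- The equivalence relation "being in the same chain component". -/
def MixedGraph.undirSetoid {V : Type*} (G : MixedGraph V) : Setoid V where
  r a b := Relation.ReflTransGen G.Undir a b
  iseqv := ⟨fun _ => Relation.ReflTransGen.refl,
    fun {x y} h => by
      change Relation.ReflTransGen G.Undir x y at h
      change Relation.ReflTransGen G.Undir y x
      induction h with
      | refl => exact Relation.ReflTransGen.refl
      | tail _ hbc ih => exact Relation.ReflTransGen.head (G.undir_symmetric hbc) ih,
    fun h h' => Relation.ReflTransGen.trans h h'⟩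

/-- The nodes of the collapsed graph: the chain components of `G`. -/
def ColNode {V : Type*} (G : MixedGraph V) : Type _ := Quotient G.undirSetoid

/-- The collapsed graph `G_col` of a chain-connected anterial graph `G`: nodes are the
chain components of `G`, with `τ(i) → τ(j)` whenever `i' → j'` in `G` for some
`i' ∈ τ(i)`, `j' ∈ τ(j)`, and `τ(i) ↔ τ(j)` whenever `i' ↔ j'` in `G` for some
`i' ∈ τ(i)`, `j' ∈ τ(j)`; it has no undirected edges. -/
def colGraph {V : Type*} (G : MixedGraph V) : MixedGraph (ColNode G) where
  dir x y := ∃ a b : V, Quotient.mk G.undirSetoid a = x ∧ Quotient.mk G.undirSetoid b = y ∧ G.dir a b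
  undir _ _ := False
  bidir x y := ∃ a b : V, Quotient.mk G.undirSetoid a = x ∧ Quotient.mk G.undirSetoid b = y ∧ G.Bidir a b

/-! Nodes in one chain component are joined by undirected paths, so every directed path in
`G_col` lifts to a semi-directed path in `G` between any representatives of its endpoints.
A directed cycle of `G_col` thus lifts to a semi-directed cycle of `G`, and a bidirected edge
of `G_col` whose endpoints are joined by a directed path lifts to a bidirected edge of `G` whose
endpoints are joined by a semi-directed path; an anterial graph has neither. -/

namespace MixedGraph

variable {V : Type*} {G : MixedGraph V}

lemma Bidir.symm {a b : V} (h : G.Bidir a b) : G.Bidir b a := Or.symm h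

lemma semiDirReach_of_mk_eq {a b : V}
    (h : Quotient.mk G.undirSetoid a = Quotient.mk G.undirSetoid b) : G.SemiDirReach a b :=
  Relation.ReflTransGen.mono (fun _ _ => Or.inr) _ _ (Quotient.exact h)

end MixedGraph

section

variable {V : Type*} {G : MixedGraph V}

lemma semiDirReach_of_colGraph_reach {x y : ColNode G}
    (h : Relation.ReflTransGen (colGraph G).dir x y) {a b : V}
    (ha : Quotient.mk G.undirSetoid a = x) (hb : Quotient.mk G.undirSetoid b = y) :
    G.SemiDirReach a b := by
  induction h generalizing b with
  | refl => exact G.semiDirReach_of_mk_eq (ha.trans hb.symm)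
  | tail _ hstep ih =>
    obtain ⟨c, d, hc, hd, hcd⟩ := hstep
    exact ((ih hc).tail (Or.inl hcd)).trans (G.semiDirReach_of_mk_eq (hd.trans hb.symm))

lemma colGraph_not_hasDirCycle (hG : G.IsCMG) :
    ¬ ∃ x y : ColNode G, (colGraph G).dir x y ∧ Relation.ReflTransGen (colGraph G).dir y x := by
  rintro ⟨x, y, ⟨a, b, ha, hb, hab⟩, hreach⟩
  exact hG ⟨a, b, hab, semiDirReach_of_colGraph_reach hreach hb ha⟩

lemma colGraph_not_reach_of_bidir (hG : ∀ a b, G.Bidir a b → ¬ G.SemiDirReach a b)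
    {x y : ColNode G} (hxy : (colGraph G).Bidir x y) :
    ¬ Relation.ReflTransGen (colGraph G).dir x y := by
  intro hreach
  rcases hxy with ⟨a, b, ha, hb, hab⟩ | ⟨b, a, hb, ha, hba⟩
  · exact hG a b hab (semiDirReach_of_colGraph_reach hreach ha hb)
  · exact hG a b hba.symm (semiDirReach_of_colGraph_reach hreach ha hb)

end

theorem statement_10_general {V : Type*} (G : MixedGraph V)
    (hant : G.IsAnterial) :
    (∀ x y : ColNode G, x ≠ y →
        ¬ (((colGraph G).dir x y ∨ (colGraph G).dir y x) ∧ (colGraph G).Bidir x y)) ∧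
    (∀ x y : ColNode G, ¬ (colGraph G).Undir x y) ∧
    (¬ ∃ x y : ColNode G, (colGraph G).dir x y ∧
        Relation.ReflTransGen (colGraph G).dir y x) ∧
    (∀ x y : ColNode G, (colGraph G).Bidir x y →
        ¬ Relation.ReflTransGen (colGraph G).dir x y) := by
  refine ⟨fun _ _ _ ⟨hdir, hbi⟩ => ?_, fun _ _ h => h.elim id id,
    colGraph_not_hasDirCycle hant.1, fun _ _ => colGraph_not_reach_of_bidir hant.2⟩
  rcases hdir with hxy | hyx
  · exact colGraph_not_reach_of_bidir hant.2 hbi (.single hxy)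
  · exact colGraph_not_reach_of_bidir hant.2 hbi.symm (.single hyx)

/-- Let `G` be a chain-connected anterial graph and `G_col` its collapsed graph over the
chain components of `G`. Then no pair of distinct chain components is joined in `G_col`
by both a directed and a bidirected edge; `G_col` has no undirected edges; `G_col` has
no directed cycle; and no bidirected edge of `G_col` has its endpoints joined by a
directed path. In particular, `G_col` is an ancestral graph. -/
theorem statement_10 {V : Type*} [Fintype V] (G : MixedGraph V)
    (hant : G.IsAnterial) (hcc : G.ChainConnected) :
    (∀ x y : ColNode G, x ≠ y →
        ¬ (((colGraph G).dir x y ∨ (colGraph G).dir y x) ∧ (colGraph G).Bidir x y)) ∧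
    (∀ x y : ColNode G, ¬ (colGraph G).Undir x y) ∧
    (¬ ∃ x y : ColNode G, (colGraph G).dir x y ∧
        Relation.ReflTransGen (colGraph G).dir y x) ∧
    (∀ x y : ColNode G, (colGraph G).Bidir x y →
        ¬ Relation.ReflTransGen (colGraph G).dir x y) :=
  statement_10_general G hant
end

section
/- Let G be a chain-connected anterial graph over a finite node set V and let C ⊆ V. Then in the counterfactual graph φ(G;C), every edge joining an observational node i (a node of the copy of G, including merged nodes) to an intervened node j^{do(C)} is either a directed edge i→j^{do(C)} or a bidirected edge i↔j^{do(C)}; in particular, no undirected edge, and no directed edge pointing from an intervened node into an observational node, joins the two copies. -/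
open MeasureTheory

universe u v w

/-- If `j` is kept and there is a semi-directed path from `j` to `i`, then `i` is kept. -/
lemma cfKeep_of_reach {V : Type*} (G : MixedGraph V) (C : Set V) {i j : V}
    (hj : CFKeep G C j) (hr : G.SemiDirReach j i) : CFKeep G C i := by
  rcases hj with hjC | ⟨x, hxant, hxC⟩
  · by_cases hji : j = i
    · exact Or.inl (hji ▸ hjC)
    · exact Or.inr ⟨j, ⟨by simpa using hji, i, rfl, hr⟩, hjC⟩
  · obtain ⟨hxj, k, hk, hreach⟩ := hxant
    simp only [Set.mem_singleton_iff] at hk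
    subst hk
    by_cases hxi : x = i
    · exact Or.inl (hxi ▸ hxC)
    · exact Or.inr ⟨x, ⟨by simpa using hxi, i, rfl, hreach.trans hr⟩, hxC⟩

/-! ## Statement 14 -/

/-- In the counterfactual graph `φ(G; C)` of a chain-connected anterial graph `G`, every
edge joining an observational node `i` to an intervened node `j^{do(C)}` is either a
directed edge `i → j^{do(C)}` or a bidirected edge `i ↔ j^{do(C)}`: no undirected edge,
and no directed edge pointing from an intervened node into an observational node, joins
the two copies. -/
theorem statement_14 {V : Type*} [Fintype V] (G : MixedGraph V)
    (hant : G.IsAnterial) (hcc : G.ChainConnected) (C : Set V) :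
    ∀ (i : V) (j : {x : V // CFKeep G C x}),
      ((phiGraph G C).Adj (Sum.inl i) (Sum.inr j) →
        (phiGraph G C).dir (Sum.inl i) (Sum.inr j) ∨
          (phiGraph G C).Bidir (Sum.inl i) (Sum.inr j)) ∧
      ¬ (phiGraph G C).Undir (Sum.inl i) (Sum.inr j) ∧
      ¬ (phiGraph G C).dir (Sum.inr j) (Sum.inl i) := by
  intro i j
  have hundir : ¬ (phiGraph G C).Undir (Sum.inl i) (Sum.inr j) := by
    rintro (⟨hnk, hu, _, _⟩ | ⟨hnk, hu, _, _⟩)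
    · exact hnk (cfKeep_of_reach G C j.2
        (Relation.ReflTransGen.single (Or.inr (Or.inr hu))))
    · exact hnk (cfKeep_of_reach G C j.2
        (Relation.ReflTransGen.single (Or.inr (Or.inl hu))))
  have hdir : ¬ (phiGraph G C).dir (Sum.inr j) (Sum.inl i) := by
    rintro ⟨hnk, (⟨hd, _⟩ | ⟨hu, _, _⟩)⟩
    · exact hnk (cfKeep_of_reach G C j.2 (Relation.ReflTransGen.single (Or.inl hd)))
    · exact hnk (cfKeep_of_reach G C j.2 (Relation.ReflTransGen.single (Or.inr hu)))
  refine ⟨?_, hundir, hdir⟩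
  rintro (h | h | h | h)
  · exact Or.inl h
  · exact absurd h hdir
  · exact absurd h hundir
  · exact Or.inr h
end
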